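/- Let p be a divisor of n. A permutation π ∈ S_n has difference sequence periodic with period dividing p if and only if there exists a triple (φ, R, k) ∈ S_p × ({0,1,…,n/p − 1})^p × Z_{n/p} with gcd(k, n/p) = 1 such that for all i ∈ {1,…,n}, π(i) = R_{i mod p}·p + φ(i mod p) + k·p·⌊(i−1)/p⌋ (values taken modulo n, with the residue i mod p represented in {1,…,p}); moreover, such a triple is unique. -/

import Mathlib

/-!
The difference sequence is `p`-periodic exactly when `x ↦ π (x + p) - π x` is invariant under
`x ↦ x + 1`, i.e. when `π (x + p) = π x + c` for a constant `c`. Since `π` is injective, `j • c = 0`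
iff `j • p = 0`, so `c` has additive order `m = n / p`; this forces `c = k p` with `k < m` coprime
to `m`. Iterating, `π (r + j p) = π r + j k p`, and splitting `π r = R_r p + φ r` for `r ≤ p`
gives the formula. `φ` is a permutation because `k p ≡ 0 [MOD p]`, so the residue of `π x` mod `p`
depends only on that of `x`. Conversely the formula gives back `π (x + p) = π x + k p`, and
uniqueness holds because the values `π 1, …, π p` determine `R` and `φ`, and `k p = π p - π 0`.
-/

/-- The representative of `x : ZMod n` in `{1, …, n}` (so `0` represents `n`). -/
def repr1 (n : ℕ) (x : ZMod n) : ℕ := if x = 0 then n else x.val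

/-- Values of `ZMod n`, embedded into `ZMod (n+1)` via representatives in `{1, …, n}`. -/
def emb (n : ℕ) (x : ZMod n) : ZMod (n + 1) := (repr1 n x : ZMod (n + 1))

/-- `L 0 = 0` and `L i = π(i)` for `i ∈ {1,…,n}`: the listing used to build
the cycle `Y_π = (π(n) π(n−1) … π(1) 0)`. -/
def listFun (n : ℕ) (π : Equiv.Perm (ZMod n)) : ZMod (n + 1) → ZMod (n + 1) :=
  fun i => if i = 0 then 0 else emb n (π (i.val : ZMod n))

/-- The inverse listing of `listFun`. -/
def listInv (n : ℕ) (π : Equiv.Perm (ZMod n)) : ZMod (n + 1) → ZMod (n + 1) :=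
  fun y => if y = 0 then 0 else emb n (π.symm (y.val : ZMod n))

/-- The cycle `Y_π = (π(n) π(n−1) … π(1) 0)` on `{0,1,…,n}`, as a function:
it sends `L(i)` to `L(i-1)`. -/
def Yfun (n : ℕ) (π : Equiv.Perm (ZMod n)) : ZMod (n + 1) → ZMod (n + 1) :=
  fun y => listFun n π (listInv n π y - 1)

/-- `C_π = Y_π ∘ X_n`, where `X_n` is the cycle `(0 1 2 … n)`, i.e. `x ↦ x + 1`. -/
def Cfun (n : ℕ) (π : Equiv.Perm (ZMod n)) : ZMod (n + 1) → ZMod (n + 1) :=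
  fun x => Yfun n π (x + 1)

/-- The strategic pile of `π ∈ S_n`: the set of values appearing strictly after `n` and
strictly before `0` on the cycle of `C_π` containing `0` and `n` (empty if `0` and `n`
lie in different cycles). -/
def strategicPile (n : ℕ) (π : Equiv.Perm (ZMod n)) : Set (ZMod (n + 1)) :=
  {x | ∃ k m : ℕ, 0 < k ∧ k < m ∧ (Cfun n π)^[m] (n : ZMod (n + 1)) = 0 ∧
      (∀ j, 0 < j → j < m → (Cfun n π)^[j] (n : ZMod (n + 1)) ≠ 0) ∧
      (Cfun n π)^[k] (n : ZMod (n + 1)) = x}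

/-- `π ∈ S_n` has maximal strategic pile. -/
def MaxPile (n : ℕ) (π : Equiv.Perm (ZMod n)) : Prop :=
  (Even n ∧ (strategicPile n π).ncard = n - 1) ∨
  (Odd n ∧ (strategicPile n π).ncard = n - 2)

/-- The position (in `{1,…,n}`) of the value `v` in `π`. -/
def idx (n : ℕ) (π : Equiv.Perm (ZMod n)) (v : ZMod n) : ℕ := repr1 n (π.symm v)

/-- Word coordinate of the occurrence of the pointer `(p,p+1)` as the right pointer of the
entry `p`:  the entry at position `i` is given word coordinate `3*i - 1`, its left pointer
coordinate `3*i - 2` and its right pointer coordinate `3*i`. -/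
def posR (n : ℕ) (π : Equiv.Perm (ZMod n)) (p : ZMod n) : ℕ := 3 * idx n π p

/-- Word coordinate of the occurrence of the pointer `(p,p+1)` as the left pointer of the
entry `p+1`. -/
def posL (n : ℕ) (π : Equiv.Perm (ZMod n)) (p : ZMod n) : ℕ := 3 * idx n π (p + 1) - 2

/-- Two pairs of positions interleave (pattern `a b a b` or `b a b a`). -/
def Interleaved (a1 a2 b1 b2 : ℕ) : Prop :=
  (min a1 a2 < min b1 b2 ∧ min b1 b2 < max a1 a2 ∧ max a1 a2 < max b1 b2) ∨
  (min b1 b2 < min a1 a2 ∧ min a1 a2 < max b1 b2 ∧ max b1 b2 < max a1 a2)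

/-- `(p, q)` is a valid pointer context for `π`: the two pointers are distinct and their
occurrences in the pointer word of `π` appear in the order `p,q,p,q` or `q,p,q,p`. -/
def ValidContext (n : ℕ) (π : Equiv.Perm (ZMod n)) (p q : ZMod n) : Prop :=
  p ≠ q ∧ Interleaved (posR n π p) (posL n π p) (posR n π q) (posL n π q)

/-- The number of (unordered) valid pointer contexts of `π`. -/
noncomputable def numContexts (n : ℕ) (π : Equiv.Perm (ZMod n)) : ℕ :=
  {pq : ZMod n × ZMod n | ValidContext n π pq.1 pq.2}.ncard / 2

/-- `ρ ∈ S_{2n−1}` is the contraction of `π ∈ S_{2n}`, obtained by deleting the entry `2n`. -/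
def IsContraction (n : ℕ) (ρ : Equiv.Perm (ZMod (2 * n - 1)))
    (π : Equiv.Perm (ZMod (2 * n))) : Prop :=
  ∃ m : ℕ, 1 ≤ m ∧ m ≤ 2 * n ∧ π (m : ZMod (2 * n)) = ((2 * n : ℕ) : ZMod (2 * n)) ∧
    (∀ k : ℕ, 1 ≤ k → k < m →
      ρ (k : ZMod (2 * n - 1)) =
        ((repr1 (2 * n) (π (k : ZMod (2 * n))) : ℕ) : ZMod (2 * n - 1))) ∧
    (∀ k : ℕ, m ≤ k → k ≤ 2 * n - 1 →
      ρ (k : ZMod (2 * n - 1)) =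
        ((repr1 (2 * n) (π ((k + 1 : ℕ) : ZMod (2 * n))) : ℕ) : ZMod (2 * n - 1)))

/-- `M_{2n}`: the contractions of permutations in `S_{2n}` with maximal strategic pile. -/
def MsetAll (n : ℕ) : Set (Equiv.Perm (ZMod (2 * n - 1))) :=
  {ρ | ∃ π : Equiv.Perm (ZMod (2 * n)), MaxPile (2 * n) π ∧ IsContraction n ρ π}

/-- `M_{2n,k}`: the contractions of permutations in `S_{2n}` with maximal strategic pile
and exactly `k` valid pointer contexts. -/
def Mset (n k : ℕ) : Set (Equiv.Perm (ZMod (2 * n - 1))) :=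
  {ρ | ρ ∈ MsetAll n ∧ numContexts (2 * n - 1) ρ = k}

/-- Cyclic shift by `a`: `C_a(π)(x) = π(x - a)`. -/
def Cshift (n : ℕ) (a : ZMod n) (π : Equiv.Perm (ZMod n)) : Equiv.Perm (ZMod n) :=
  (Equiv.subRight a).trans π

/-- Translation by `b`: `T_b(π)(x) = π(x) + b`. -/
def Tshift (n : ℕ) (b : ZMod n) (π : Equiv.Perm (ZMod n)) : Equiv.Perm (ZMod n) :=
  π.trans (Equiv.addRight b)

/-- `φ(a,b,π) = C_a(T_b(π))`, i.e. `x ↦ π(x-a) + b`. -/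
def phiAct (n : ℕ) (a b : ZMod n) (π : Equiv.Perm (ZMod n)) : Equiv.Perm (ZMod n) :=
  Cshift n a (Tshift n b π)

/-- The difference sequence of `π`. -/
def Dseq (n : ℕ) (π : Equiv.Perm (ZMod n)) : ZMod n → ZMod n :=
  fun k => π (k + 1) - π k

/-- The difference sequence of `π` is periodic with (least) period `p`, `0 < p < n`. -/
def PeriodicWith (n : ℕ) (π : Equiv.Perm (ZMod n)) (p : ℕ) : Prop :=
  0 < p ∧ p < n ∧ (∀ k : ZMod n, Dseq n π (k + (p : ZMod n)) = Dseq n π k) ∧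
    ∀ q : ℕ, 0 < q → q < p → ¬ ∀ k : ZMod n, Dseq n π (k + (q : ZMod n)) = Dseq n π k

section Repr1

variable {n : ℕ}

lemma natCast_injOn_Icc : Set.InjOn (Nat.cast : ℕ → ZMod n) (Set.Icc 1 n) := by
  rintro a ⟨ha1, han⟩ b ⟨hb1, hbn⟩ h
  have h' : ((a - 1 : ℕ) : ZMod n) = ((b - 1 : ℕ) : ZMod n) := by
    rw [Nat.cast_sub ha1, Nat.cast_sub hb1, h]
  have := congrArg ZMod.val h'
  rw [ZMod.val_cast_of_lt (by omega), ZMod.val_cast_of_lt (by omega)] at this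
  omega

variable [NeZero n]

@[simp]
lemma natCast_repr1 (x : ZMod n) : ((repr1 n x : ℕ) : ZMod n) = x := by
  unfold repr1
  split_ifs with h
  · simp [h]
  · exact ZMod.natCast_zmod_val x

lemma one_le_repr1 (x : ZMod n) : 1 ≤ repr1 n x := by
  unfold repr1
  split_ifs with h
  · exact Nat.one_le_iff_ne_zero.mpr (NeZero.ne n)
  · exact Nat.one_le_iff_ne_zero.mpr ((ZMod.val_ne_zero x).mpr h)

lemma repr1_le (x : ZMod n) : repr1 n x ≤ n := by
  unfold repr1
  split_ifs
  · exact le_rfl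
  · exact (ZMod.val_lt x).le

lemma repr1_natCast {i : ℕ} (h1 : 1 ≤ i) (h2 : i ≤ n) : repr1 n (i : ZMod n) = i :=
  natCast_injOn_Icc ⟨one_le_repr1 _, repr1_le _⟩ ⟨h1, h2⟩ (natCast_repr1 _)

lemma natCast_repr1_eq_castHom {p : ℕ} (h : p ∣ n) (x : ZMod n) :
    ((repr1 n x : ℕ) : ZMod p) = ZMod.castHom h (ZMod p) x := by
  conv_rhs => rw [← natCast_repr1 x]
  rw [map_natCast]

lemma apply_eq_apply_zero_of_periodic_one {α : Type*} {g : ZMod n → α}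
    (h : Function.Periodic g 1) (x : ZMod n) : g x = g 0 := by
  rw [← ZMod.natCast_zmod_val x]
  induction x.val with
  | zero => simp
  | succ k ih => rw [Nat.cast_succ, h, ih]

end Repr1

section Blocks

variable {p : ℕ} [NeZero p]

lemma natCast_mul_add_repr1 (j : ℕ) (x : ZMod p) : ((j * p + repr1 p x : ℕ) : ZMod p) = x := by
  simp

lemma mul_add_repr1_sub_one_div (j : ℕ) (x : ZMod p) : (j * p + repr1 p x - 1) / p = j := by
  have := one_le_repr1 x
  have := repr1_le x
  exact Nat.div_eq_of_lt_le (by omega) (by rw [add_mul, one_mul]; omega)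

lemma sub_one_div_mul_add_repr1 {i : ℕ} (hi : 1 ≤ i) :
    (i - 1) / p * p + repr1 p (i : ZMod p) = i := by
  have hp : 0 < p := Nat.pos_of_ne_zero (NeZero.ne p)
  have hi' : i = (i - 1) / p * p + ((i - 1) % p + 1) := by
    have := Nat.div_add_mod' (i - 1) p
    omega
  have hr : repr1 p (i : ZMod p) = (i - 1) % p + 1 := by
    conv_lhs => rw [hi']
    rw [Nat.cast_add, Nat.cast_mul, ZMod.natCast_self, mul_zero, zero_add,
      repr1_natCast (by omega) (Nat.mod_lt _ hp)]
  omega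

lemma mul_add_repr1_injective {j j' : ℕ} {x x' : ZMod p}
    (h : j * p + repr1 p x = j' * p + repr1 p x') : j = j' ∧ x = x' := by
  constructor
  · rw [← mul_add_repr1_sub_one_div j x, h, mul_add_repr1_sub_one_div]
  · rw [← natCast_mul_add_repr1 j x, h, natCast_mul_add_repr1]

lemma mul_add_repr1_le {j m : ℕ} (hj : j < m) (x : ZMod p) : j * p + repr1 p x ≤ p * m := by
  have := repr1_le x
  nlinarith

end Blocks

lemma apply_add_nsmul_of_apply_add {G H : Type*} [AddMonoid G] [AddMonoid H] {f : G → H}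
    {a : G} {b : H} (h : ∀ x, f (x + a) = f x + b) (x : G) (j : ℕ) :
    f (x + j • a) = f x + j • b :=
  AddConstMapClass.map_add_nsmul (AddConstMap.mk f h) x j

lemma dseq_add_eq_iff {n : ℕ} [NeZero n] {π : Equiv.Perm (ZMod n)} {a : ZMod n} :
    (∀ k, Dseq n π (k + a) = Dseq n π k) ↔ ∃ c, ∀ x, π (x + a) = π x + c := by
  constructor
  · intro h
    have hper : Function.Periodic (fun x => π (x + a) - π x) 1 := fun x => by
      have := h x
      simp only [Dseq, add_right_comm x a 1] at this ⊢
      linear_combination this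
    exact ⟨π (0 + a) - π 0, fun x => by
      linear_combination apply_eq_apply_zero_of_periodic_one hper x⟩
  · rintro ⟨c, hc⟩ k
    simp only [Dseq, add_right_comm k a 1, hc]
    ring

def IsBlockForm {p m : ℕ} (π : Equiv.Perm (ZMod (p * m))) (φ : Equiv.Perm (ZMod p))
    (R : ZMod p → ℕ) (k : ℕ) : Prop :=
  ∀ i : ℕ, 1 ≤ i → i ≤ p * m →
    π (i : ZMod (p * m)) =
      ((R (i : ZMod p) * p + repr1 p (φ (i : ZMod p)) + k * p * ((i - 1) / p) : ℕ) : ZMod (p * m))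

section BlockForm

variable {p m : ℕ}

lemma natCast_mul_eq_natCast_mod_mul (j : ℕ) :
    (j : ZMod (p * m)) * p = ((j % m : ℕ) : ZMod (p * m)) * p := by
  rw [← Nat.cast_mul, ← Nat.cast_mul, ZMod.natCast_eq_natCast_iff', mul_comm p m,
    Nat.mul_mod_mul_right, Nat.mul_mod_mul_right, Nat.mod_mod]

lemma nsmul_eq_zero_iff_dvd_of_apply_add [NeZero p] {π : Equiv.Perm (ZMod (p * m))}
    {c : ZMod (p * m)} (hc : ∀ x, π (x + p) = π x + c) (j : ℕ) : j • c = 0 ↔ m ∣ j := by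
  have h := apply_add_nsmul_of_apply_add hc 0 j
  rw [zero_add] at h
  calc j • c = 0 ↔ π (j • (p : ZMod (p * m))) = π 0 := by rw [h, add_eq_left]
    _ ↔ j • (p : ZMod (p * m)) = 0 := π.injective.eq_iff
    _ ↔ m ∣ j := by
      rw [nsmul_eq_mul, ← Nat.cast_mul, ZMod.natCast_eq_zero_iff, mul_comm j p,
        Nat.mul_dvd_mul_iff_left (NeZero.pos p)]

lemma exists_coprime_of_nsmul_eq_zero_iff [NeZero p] [NeZero m] {c : ZMod (p * m)}
    (hc : ∀ j : ℕ, j • c = 0 ↔ m ∣ j) :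
    ∃ k < m, k.Coprime m ∧ c = ((k * p : ℕ) : ZMod (p * m)) := by
  have hpc : p ∣ c.val := by
    have : ((m * c.val : ℕ) : ZMod (p * m)) = 0 := by
      rw [Nat.cast_mul, ZMod.natCast_zmod_val, ← nsmul_eq_mul, hc]
    rw [ZMod.natCast_eq_zero_iff] at this
    exact Nat.dvd_of_mul_dvd_mul_left (NeZero.pos m) ((dvd_of_eq (mul_comm m p)).trans this)
  obtain ⟨k, hk⟩ := hpc
  have hcast : c = ((k * p : ℕ) : ZMod (p * m)) := by
    rw [mul_comm k p, ← hk, ZMod.natCast_zmod_val]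
  refine ⟨k, Nat.lt_of_mul_lt_mul_left (hk ▸ ZMod.val_lt c), ?_, hcast⟩
  set d := k.gcd m
  obtain ⟨k', hk'⟩ : d ∣ k := Nat.gcd_dvd_left k m
  obtain ⟨m', hm'⟩ : d ∣ m := Nat.gcd_dvd_right k m
  have hmm' : m ∣ m' := (hc m').mp <| by
    rw [hcast, nsmul_eq_mul, ← Nat.cast_mul, ZMod.natCast_eq_zero_iff]
    exact ⟨k', by rw [hk', hm']; ring⟩
  have hm'm : m' = m := Nat.dvd_antisymm (Dvd.intro_left _ hm'.symm) hmm'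
  rw [hm'm] at hm'
  exact (Nat.mul_eq_right (NeZero.ne m)).mp hm'.symm

variable [NeZero p] {π : Equiv.Perm (ZMod (p * m))} {φ : Equiv.Perm (ZMod p)} {R : ZMod p → ℕ}
  {k : ℕ}

lemma IsBlockForm.of_apply_add (hc : ∀ x, π (x + p) = π x + ((k * p : ℕ) : ZMod (p * m)))
    (h₀ : ∀ x : ZMod p, π (repr1 p x : ℕ) = ((R x * p + repr1 p (φ x) : ℕ) : ZMod (p * m))) :
    IsBlockForm π φ R k := by
  intro i h1 _
  have hi : (i : ZMod (p * m)) = repr1 p (i : ZMod p) + ((i - 1) / p) • (p : ZMod (p * m)) := by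
    conv_lhs => rw [← sub_one_div_mul_add_repr1 (p := p) h1]
    push_cast
    rw [nsmul_eq_mul]
    ring
  rw [hi, apply_add_nsmul_of_apply_add hc, h₀, nsmul_eq_mul]
  push_cast
  ring

variable [NeZero m]

lemma IsBlockForm.apply_mul_add (h : IsBlockForm π φ R k) (x : ZMod p) (j : ℕ) :
    π ((j * p + repr1 p x : ℕ) : ZMod (p * m)) =
      ((R x * p + repr1 p (φ x) + k * p * j : ℕ) : ZMod (p * m)) := by
  have hj := natCast_mul_eq_natCast_mod_mul (p := p) (m := m) j
  have := h (j % m * p + repr1 p x) (by have := one_le_repr1 x; omega)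
    (mul_add_repr1_le (Nat.mod_lt _ (NeZero.pos m)) x)
  rw [natCast_mul_add_repr1, mul_add_repr1_sub_one_div] at this
  push_cast at this ⊢
  rw [hj, this]
  linear_combination (k : ZMod (p * m)) * hj.symm

lemma IsBlockForm.apply_add (h : IsBlockForm π φ R k) (x : ZMod (p * m)) :
    π (x + p) = π x + ((k * p : ℕ) : ZMod (p * m)) := by
  set i := repr1 (p * m) x
  have hx : x = (((i - 1) / p * p + repr1 p (i : ZMod p) : ℕ) : ZMod (p * m)) := by
    rw [sub_one_div_mul_add_repr1 (one_le_repr1 x), natCast_repr1]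
  have hxp : x + p = ((((i - 1) / p + 1) * p + repr1 p (i : ZMod p) : ℕ) : ZMod (p * m)) := by
    rw [hx]; push_cast; ring
  rw [hxp, hx, h.apply_mul_add, h.apply_mul_add]
  push_cast
  ring

lemma IsBlockForm.unique {φ' : Equiv.Perm (ZMod p)} {R' : ZMod p → ℕ} {k' : ℕ}
    (h : IsBlockForm π φ R k) (h' : IsBlockForm π φ' R' k') (hR : ∀ x, R x < m)
    (hR' : ∀ x, R' x < m) (hk : k < m) (hk' : k' < m) : (φ, R, k) = (φ', R', k') := by
  have hblock : ∀ x, R x = R' x ∧ φ x = φ' x := fun x => by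
    have e := (h.apply_mul_add x 0).symm.trans (h'.apply_mul_add x 0)
    simp only [mul_zero, add_zero] at e
    have := one_le_repr1 (φ x)
    have := one_le_repr1 (φ' x)
    exact mul_add_repr1_injective <| natCast_injOn_Icc
      ⟨by omega, mul_add_repr1_le (hR x) _⟩ ⟨by omega, mul_add_repr1_le (hR' x) _⟩ e
  have hkk : k = k' := by
    have e := congrArg ZMod.val <| add_left_cancel <|
      (h.apply_add 0).symm.trans (h'.apply_add 0)
    have hlt : ∀ l < m, l * p < p * m := fun l hl => by
      rw [mul_comm p m]; exact Nat.mul_lt_mul_of_pos_right hl (NeZero.pos p)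
    rw [ZMod.val_cast_of_lt (hlt k hk), ZMod.val_cast_of_lt (hlt k' hk')] at e
    exact Nat.eq_of_mul_eq_mul_right (NeZero.pos p) e
  simp only [Prod.mk.injEq]
  exact ⟨Equiv.ext fun x => (hblock x).2, funext fun x => (hblock x).1, hkk⟩

lemma castHom_apply_eq_of_apply_add (hc : ∀ x, π (x + p) = π x + ((k * p : ℕ) : ZMod (p * m)))
    {x y : ZMod (p * m)} (hxy : ZMod.castHom (dvd_mul_right p m) (ZMod p) x =
      ZMod.castHom (dvd_mul_right p m) (ZMod p) y) :
    ZMod.castHom (dvd_mul_right p m) (ZMod p) (π x) =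
      ZMod.castHom (dvd_mul_right p m) (ZMod p) (π y) := by
  obtain ⟨j, hj⟩ : p ∣ (x - y).val := by
    rw [← ZMod.natCast_eq_zero_iff, ZMod.natCast_val,
      ← ZMod.castHom_apply (h := dvd_mul_right p m), map_sub, hxy, sub_self]
  have hx : x = y + j • (p : ZMod (p * m)) := by
    rw [nsmul_eq_mul, ← Nat.cast_mul, mul_comm j p, ← hj, ZMod.natCast_zmod_val, add_sub_cancel]
  rw [hx, apply_add_nsmul_of_apply_add hc, map_add, map_nsmul, map_natCast, Nat.cast_mul,
    ZMod.natCast_self, mul_zero, smul_zero, add_zero]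

lemma exists_isBlockForm (hc : ∀ x, π (x + p) = π x + ((k * p : ℕ) : ZMod (p * m))) :
    ∃ (φ : Equiv.Perm (ZMod p)) (R : ZMod p → ℕ), (∀ x, R x < m) ∧ IsBlockForm π φ R k := by
  set f := ZMod.castHom (dvd_mul_right p m) (ZMod p)
  set lift : ZMod p → ZMod (p * m) := fun x => (repr1 p x : ℕ)
  have hf_lift : ∀ x, f (lift x) = x := fun x => by simp [f, lift]
  have hsurj : Function.Surjective fun x => f (π (lift x)) := fun y =>
    ⟨f (π.symm (lift y)), by
      dsimp only
      rw [castHom_apply_eq_of_apply_add hc (hf_lift _), Equiv.apply_symm_apply, hf_lift]⟩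
  refine ⟨Equiv.ofBijective _ (Finite.surjective_iff_bijective.mp hsurj),
    fun x => (repr1 (p * m) (π (lift x)) - 1) / p, fun x => ?_,
    IsBlockForm.of_apply_add hc fun x => ?_⟩
  · have := one_le_repr1 (π (lift x))
    have := repr1_le (π (lift x))
    rw [Nat.div_lt_iff_lt_mul (NeZero.pos p), mul_comm m p]
    omega
  · rw [Equiv.ofBijective_apply, ← natCast_repr1_eq_castHom,
      sub_one_div_mul_add_repr1 (one_le_repr1 _), natCast_repr1]

end BlockForm

theorem stmt10_general (n p : ℕ) (hn : 0 < n) (hdvd : p ∣ n)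
    (π : Equiv.Perm (ZMod n)) :
    (∀ k : ZMod n, Dseq n π (k + (p : ZMod n)) = Dseq n π k) ↔
    (∃! t : Equiv.Perm (ZMod p) × (ZMod p → ℕ) × ℕ,
      (∀ i : ZMod p, t.2.1 i < n / p) ∧ t.2.2 < n / p ∧ Nat.gcd t.2.2 (n / p) = 1 ∧
      ∀ i : ℕ, 1 ≤ i → i ≤ n →
        π ((i : ℕ) : ZMod n) =
          ((t.2.1 ((i : ℕ) : ZMod p) * p + repr1 p (t.1 ((i : ℕ) : ZMod p)) +
              t.2.2 * p * ((i - 1) / p) : ℕ) : ZMod n)) := by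
  obtain ⟨m, rfl⟩ := hdvd
  have : NeZero p := ⟨by rintro rfl; simp at hn⟩
  have : NeZero m := ⟨by rintro rfl; simp at hn⟩
  rw [Nat.mul_div_cancel_left m (NeZero.pos p), dseq_add_eq_iff]
  constructor
  · rintro ⟨c, hc⟩
    obtain ⟨k, hkm, hkm_coprime, rfl⟩ :=
      exists_coprime_of_nsmul_eq_zero_iff (nsmul_eq_zero_iff_dvd_of_apply_add hc)
    obtain ⟨φ, R, hR, hφR⟩ := exists_isBlockForm hc
    refine ⟨(φ, R, k), ⟨hR, hkm, hkm_coprime, hφR⟩, ?_⟩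
    rintro ⟨φ', R', k'⟩ ⟨hR', hk', -, hφR'⟩
    exact IsBlockForm.unique hφR' hφR hR' hR hk' hkm
  · rintro ⟨⟨φ, R, k⟩, ⟨-, -, -, hφR⟩, -⟩
    exact ⟨_, IsBlockForm.apply_add hφR⟩

/-- Let `p ∣ n`.  A permutation `π ∈ S_n` has difference sequence periodic
with period dividing `p` iff there is a (unique) triple
`(φ, R, k) ∈ S_p × ({0,…,n/p - 1})^p × Z_{n/p}` with `gcd(k, n/p) = 1` such that for all
`i ∈ {1,…,n}`, `π(i) = R_{i mod p}·p + φ(i mod p) + k·p·⌊(i-1)/p⌋` (mod `n`). -/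
theorem stmt10 (n p : ℕ) (hn : 0 < n) (hp : 0 < p) (hdvd : p ∣ n)
    (π : Equiv.Perm (ZMod n)) :
    (∀ k : ZMod n, Dseq n π (k + (p : ZMod n)) = Dseq n π k) ↔
    (∃! t : Equiv.Perm (ZMod p) × (ZMod p → ℕ) × ℕ,
      (∀ i : ZMod p, t.2.1 i < n / p) ∧ t.2.2 < n / p ∧ Nat.gcd t.2.2 (n / p) = 1 ∧
      ∀ i : ℕ, 1 ≤ i → i ≤ n →
        π ((i : ℕ) : ZMod n) =
          ((t.2.1 ((i : ℕ) : ZMod p) * p + repr1 p (t.1 ((i : ℕ) : ZMod p)) +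
              t.2.2 * p * ((i - 1) / p) : ℕ) : ZMod n)) :=
  stmt10_general n p hn hdvd π
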